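/- Discrete energy inequality for the matrix-valued neo-Hookean update: let F_n, F_{n+1} be d×d matrices with positive determinant and G a d×d matrix with F_{n+1} = F_n + Δt·G, Δt > 0. Then Ψ(F_{n+1}) − Ψ(F_n) ≤ Δt·c₁·(F_{n+1}:G) − Δt·c₁·tr(F_{n+1}⁻¹G) + (c₁Δt²/2)(|F_{n+1}⁻¹G|² − |G|²), where Ψ(F) = (c₁/2)(tr(FFᵀ)−d) − c₁ ln det F, A:B = tr(ABᵀ), |A|² = A:A. -/

import Mathlib

/-!
Write `Fₙ = Fₙ₊₁ (1 - Δt B)` with `B = Fₙ₊₁⁻¹ G`. The logarithmic part of the energy difference is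
then `log det (1 - Δt B)`, which is at most `(|1 - Δt B|² - d) / 2` by `log λ ≤ λ - 1` applied to the
eigenvalues of the positive definite matrix `(1 - Δt B)(1 - Δt B)ᵀ`; the quadratic part is an exact
expansion of `|Fₙ₊₁ - Δt G|²`.
-/

open Matrix

noncomputable def neoHookeanEnergy (d : ℕ) (c₁ : ℝ)
    (F : Matrix (Fin d) (Fin d) ℝ) : ℝ :=
  (c₁/2) * ((F * Fᵀ).trace - (d : ℝ)) - c₁ * Real.log F.det

namespace Matrix

variable {m n R : Type*} [Fintype n]

theorem trace_sub_smul_mul_transpose_sub_smul [Fintype m] [CommRing R]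
    (A B : Matrix m n R) (t : R) :
    ((A - t • B) * (A - t • B)ᵀ).trace
      = (A * Aᵀ).trace - 2 * t * (A * Bᵀ).trace + t ^ 2 * (B * Bᵀ).trace := by
  have hBA : (B * Aᵀ).trace = (A * Bᵀ).trace := by
    rw [← trace_transpose, transpose_mul, transpose_transpose]
  simp only [transpose_sub, transpose_smul, Matrix.sub_mul, Matrix.mul_sub, Matrix.smul_mul,
    Matrix.mul_smul, trace_sub, trace_smul, smul_eq_mul, hBA]
  ring

variable [DecidableEq n]

theorem PosDef.log_det_le_trace_sub_card {A : Matrix n n ℝ} (hA : A.PosDef) :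
    Real.log A.det ≤ A.trace - Fintype.card n := by
  have hpos := hA.eigenvalues_pos
  rw [hA.1.det_eq_prod_eigenvalues, hA.1.trace_eq_sum_eigenvalues]
  simp only [RCLike.ofReal_real_eq_id, id]
  rw [Real.log_prod fun i _ => (hpos i).ne', Fintype.card_eq_sum_ones, Nat.cast_sum,
    Nat.cast_one, ← Finset.sum_sub_distrib]
  exact Finset.sum_le_sum fun i _ => Real.log_le_sub_one_of_pos (hpos i)

theorem two_mul_log_det_le_trace_mul_transpose_sub_card {M : Matrix n n ℝ} (hM : M.det ≠ 0) :
    2 * Real.log M.det ≤ (M * Mᵀ).trace - Fintype.card n := by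
  have hMMt : (M * Mᵀ).PosDef := by
    simpa using PosDef.mul_conjTranspose_self M
      (vecMul_injective_iff_isUnit.mpr ((isUnit_iff_isUnit_det M).mpr hM.isUnit))
  calc 2 * Real.log M.det = Real.log (M * Mᵀ).det := by
        rw [det_mul, det_transpose, Real.log_mul hM hM]; ring
    _ ≤ _ := hMMt.log_det_le_trace_sub_card

theorem log_det_sub_smul_sub_log_det_le {F G : Matrix n n ℝ} {t : ℝ} (hF : F.det ≠ 0)
    (hFG : (F - t • G).det ≠ 0) :
    Real.log (F - t • G).det - Real.log F.det
      ≤ -t * (F⁻¹ * G).trace + t ^ 2 / 2 * ((F⁻¹ * G) * (F⁻¹ * G)ᵀ).trace := by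
  set B := F⁻¹ * G
  have hfactor : F - t • G = F * (1 - t • B) := by
    rw [mul_sub, mul_one, Matrix.mul_smul, ← Matrix.mul_assoc, mul_nonsing_inv _ hF.isUnit,
      Matrix.one_mul]
  have hdet : (1 - t • B).det ≠ 0 := by
    rw [hfactor, det_mul] at hFG
    exact right_ne_zero_of_mul hFG
  have hbound := two_mul_log_det_le_trace_mul_transpose_sub_card hdet
  rw [trace_sub_smul_mul_transpose_sub_smul, Matrix.one_mul, transpose_one, Matrix.one_mul,
    trace_one, trace_transpose] at hbound
  rw [hfactor, det_mul, Real.log_mul hF hdet]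
  linarith

end Matrix

theorem neoHookean_discrete_bound_general (d : ℕ) (c₁ Δt : ℝ) (hc : 0 < c₁)
    (Fn Fn1 G : Matrix (Fin d) (Fin d) ℝ)
    (hFn : 0 < Fn.det) (hFn1 : 0 < Fn1.det) (h : Fn1 = Fn + Δt • G) :
    neoHookeanEnergy d c₁ Fn1 - neoHookeanEnergy d c₁ Fn
      ≤ Δt * c₁ * (Fn1 * Gᵀ).trace - Δt * c₁ * (Fn1⁻¹ * G).trace
        + (c₁ * Δt^2 / 2) *
          (((Fn1⁻¹ * G) * (Fn1⁻¹ * G)ᵀ).trace - (G * Gᵀ).trace) := by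
  obtain rfl : Fn = Fn1 - Δt • G := by rw [h, add_sub_cancel_right]
  have hlog := log_det_sub_smul_sub_log_det_le hFn1.ne' hFn.ne'
  have htrace := trace_sub_smul_mul_transpose_sub_smul Fn1 G Δt
  unfold neoHookeanEnergy
  rw [htrace]
  linear_combination c₁ * hlog

theorem neoHookean_discrete_bound (d : ℕ) (c₁ Δt : ℝ) (hc : 0 < c₁)
    (hΔt : 0 < Δt) (Fn Fn1 G : Matrix (Fin d) (Fin d) ℝ)
    (hFn : 0 < Fn.det) (hFn1 : 0 < Fn1.det) (h : Fn1 = Fn + Δt • G) :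
    neoHookeanEnergy d c₁ Fn1 - neoHookeanEnergy d c₁ Fn
      ≤ Δt * c₁ * (Fn1 * Gᵀ).trace - Δt * c₁ * (Fn1⁻¹ * G).trace
        + (c₁ * Δt^2 / 2) *
          (((Fn1⁻¹ * G) * (Fn1⁻¹ * G)ᵀ).trace - (G * Gᵀ).trace) :=
  neoHookean_discrete_bound_general d c₁ Δt hc Fn Fn1 G hFn hFn1 h
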